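/- Let Λ be a Bedford–McMullen carpet with non-uniform vertical fibres, and set t' = ( ∑_{ĵ=1}^M N_ĵ^{1/γ}·log N_ĵ ) / ( ∑_{ĵ=1}^M N_ĵ^{1/γ} ). Then there is a unique t* ∈ (t̲, max_ĵ log N_ĵ) satisfying dim_H Λ = dim_B Λ − (1 − γ^{−1})·I(t*)/log m, and moreover t_1(dim_H Λ) < t' < t*. -/

import Mathlib

/-!
Write `L(l) = log ((1/M) ∑ N_ĵ ^ l)` (`logMeanRpow`), so that `I` is the Legendre transform of `L`
and `tiltedLogMean` is `L'`, and put `u = γ⁻¹`. The Bedford–McMullen formulas give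
`dim_B - dim_H = (1 - u) c / log m` with `c = (u L(1) - L(u)) / (1 - u)`, so `t*` is a solution
of `I(t*) = c`. As `L` is strictly convex and `L'(u) = t'`, the chord of `L` over `[u, 1]` lies
strictly above the tangent at `u` and has slope below `max log N_ĵ`; hence
`0 < I(t') = u t' - L(u) < c < max log N_ĵ - L(1)`. The convex function `I` vanishes at
`t̲ = L'(0)` and exceeds `c` near `max log N_ĵ`, so it crosses the level `c` exactly once there,
and to the right of `t'`. Finally `t_1(dim_H) = L(u) / u < t'` is the tangent inequality at `0`.
-/

open Filter Set MeasureTheory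
open scoped ENNReal NNReal Topology

noncomputable section

/-- The data defining a Bedford–McMullen carpet: an `m × n` grid with `n > m ≥ 2` and a
nonempty set `A` of selected rectangles, with more than one nonempty column. -/
structure BMData where
  m : ℕ
  n : ℕ
  two_le_m : 2 ≤ m
  m_lt_n : m < n
  A : Finset (Fin m × Fin n)
  A_nonempty : A.Nonempty
  one_lt_cols : 1 < (A.image Prod.fst).card

namespace BMData

variable (C : BMData)

/-- The affine contraction `f_{(i,j)}` associated to a selected rectangle `(i, j) ∈ A`
(with the grid indexed from `0` rather than from `1`). -/
def map (p : Fin C.m × Fin C.n) (x : ℝ × ℝ) : ℝ × ℝ :=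
  (x.1 / C.m + (p.1 : ℝ) / C.m, x.2 / C.n + (p.2 : ℝ) / C.n)

/-- `Λ` is the attractor of the iterated function system: the unique nonempty compact set
satisfying `Λ = ⋃_{p ∈ A} f_p(Λ)`. -/
def IsAttractor (Λ : Set (ℝ × ℝ)) : Prop :=
  Λ.Nonempty ∧ IsCompact Λ ∧ Λ = ⋃ p ∈ C.A, C.map p '' Λ

/-- The (finite set of) nonempty columns. -/
def cols : Finset (Fin C.m) := C.A.image Prod.fst

/-- `M`, the number of nonempty columns. -/
def M : ℕ := C.cols.card

/-- `N`, the total number of maps. -/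
def N : ℕ := C.A.card

/-- The number `N_î` of maps in column `î`. -/
def colCount (i : Fin C.m) : ℕ := (C.A.filter fun p => p.1 = i).card

/-- Non-uniform vertical fibres: the column counts are not all equal. -/
def NonUniform : Prop :=
  ∃ i ∈ C.cols, ∃ j ∈ C.cols, C.colCount i ≠ C.colCount j

/-- `γ = log n / log m`. -/
def gamma : ℝ := Real.log C.n / Real.log C.m

/-- `t̲ = (1/M) ∑_ĵ log N_ĵ`. -/
def tLow : ℝ := (1 / (C.M : ℝ)) * ∑ j ∈ C.cols, Real.log (C.colCount j)

/-- `t̄ = ∑_ĵ (N_ĵ/N) log N_ĵ`. -/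
def tUp : ℝ := ∑ j ∈ C.cols, ((C.colCount j : ℝ) / (C.N : ℝ)) * Real.log (C.colCount j)

/-- The large deviations rate function
`I(t) = sup_λ (λt − log((1/M) ∑_ĵ N_ĵ^λ))`. -/
def rate (t : ℝ) : ℝ :=
  ⨆ l : ℝ, (l * t - Real.log ((1 / (C.M : ℝ)) * ∑ j ∈ C.cols, (C.colCount j : ℝ) ^ l))

/-- The map `T_s(t) = (s − log M/log m)·log n + γ·I(t)`. -/
def T (s t : ℝ) : ℝ :=
  (s - Real.log C.M / Real.log C.m) * Real.log C.n + C.gamma * C.rate t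

/-- The sequence `t_ℓ(s)`, shifted so that `t_L(s) = tseq s (L - 1)`:
`tseq s 0 = t_1(s) = (s − log M/log m)·log n` and `tseq s (k+1) = T_s (tseq s k)`. -/
def tseq (s : ℝ) : ℕ → ℝ
  | 0 => (s - Real.log C.M / Real.log C.m) * Real.log C.n
  | k + 1 => C.T s (tseq s k)

/-- The Hausdorff dimension of the carpet (Bedford–McMullen formula). -/
def dimH : ℝ :=
  (1 / Real.log C.m) *
    Real.log (∑ j ∈ C.cols, (C.colCount j : ℝ) ^ (Real.log C.m / Real.log C.n))

/-- The box dimension of the carpet (Bedford–McMullen formula). -/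
def dimB : ℝ :=
  Real.log C.N / Real.log C.n + (1 - Real.log C.m / Real.log C.n) * (Real.log C.M / Real.log C.m)

/-- `(M₀, Ñ_1 > ⋯ > Ñ_{M₀}, R_1, …, R_{M₀})` are the parameters of the carpet: `Ñ` lists the
distinct values among the column counts in strictly decreasing order, and `R î` is the number
of nonempty columns whose count equals `Ñ î`. -/
def HasParams (M0 : ℕ) (Nt R : Fin M0 → ℕ) : Prop :=
  (∀ i j : Fin M0, i < j → Nt j < Nt i) ∧
  (∀ i : Fin M0, 0 < R i) ∧
  (∀ c ∈ C.cols, ∃ i : Fin M0, C.colCount c = Nt i) ∧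
  (∀ i : Fin M0, R i = (C.cols.filter fun c => C.colCount c = Nt i).card)

/-- `ψ_{ī|k}(s) = M^{kγ}·n^{−sk}·∏_{ℓ=1}^k N_{i_ℓ}` for a word `ī` of length `J` over the
alphabet of nonempty columns. -/
def psi (s : ℝ) {J : ℕ} (w : Fin J → {c // c ∈ C.cols}) (k : ℕ) : ℝ :=
  (C.M : ℝ) ^ ((k : ℝ) * C.gamma) * (C.n : ℝ) ^ (-(s * (k : ℝ))) *
    ∏ l ∈ Finset.univ.filter (fun l : Fin J => (l : ℕ) < k), (C.colCount (w l).1 : ℝ)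

/-- `Ψ_J(s) = ∑_{ī} min_{0 ≤ k ≤ J} ψ_{ī|k}(s)`. -/
def Psi (J : ℕ) (s : ℝ) : ℝ :=
  ∑ w : Fin J → {c // c ∈ C.cols}, ⨅ k : Fin (J + 1), C.psi s w (k : ℕ)

open Classical in
/-- `∑_{ī : ψ_{ī|J}(s) ≤ 1} ψ_{ī|J}(s)`. -/
def psiSumLe (s : ℝ) (J : ℕ) : ℝ :=
  ∑ w : Fin J → {c // c ∈ C.cols}, if C.psi s w J ≤ 1 then C.psi s w J else 0

/-- `H(Q*_t)`: the maximal entropy of a probability vector `q` on the nonempty columns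
subject to `∑_ĵ q_ĵ log N_ĵ = t`. -/
def entMax (t : ℝ) : ℝ :=
  sSup { h : ℝ | ∃ q : Fin C.m → ℝ, (∀ j, 0 ≤ q j) ∧ (∀ j ∉ C.cols, q j = 0) ∧
    (∑ j ∈ C.cols, q j) = 1 ∧ (∑ j ∈ C.cols, q j * Real.log (C.colCount j)) = t ∧
    h = -∑ j ∈ C.cols, q j * Real.log (q j) }

/-- A probability vector on the nonempty columns. -/
def IsProbVec (p : Fin C.m → ℝ) : Prop :=
  (∀ j, 0 ≤ p j) ∧ (∀ j ∉ C.cols, p j = 0) ∧ (∑ j ∈ C.cols, p j) = 1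

/-- `∑_ĵ p_ĵ log N_ĵ`. -/
def colAvg (p : Fin C.m → ℝ) : ℝ := ∑ j ∈ C.cols, p j * Real.log (C.colCount j)

/-- The relative entropy `H(p‖P)` where `P = (N_1/N, …, N_M/N)`. -/
def relEntP (p : Fin C.m → ℝ) : ℝ :=
  ∑ j ∈ C.cols, p j * Real.log (p j / ((C.colCount j : ℝ) / (C.N : ℝ)))

/-- The relative entropy `H(p‖Q)` where `Q = (1/M, …, 1/M)`. -/
def relEntQ (p : Fin C.m → ℝ) : ℝ :=
  ∑ j ∈ C.cols, p j * Real.log (p j / (1 / (C.M : ℝ)))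

/-- The function `β(ξ)` of the multifractal spectrum of the uniform self-affine measure. -/
def beta (ξ : ℝ) : ℝ :=
  (1 / Real.log C.m) * (-(ξ * Real.log C.N) +
    Real.log (∑ j ∈ C.cols, (C.colCount j : ℝ) ^ (C.gamma⁻¹ + (1 - C.gamma⁻¹) * ξ)))

/-- `f(α) = inf_ξ (αξ + β(ξ))`. -/
def fspec (α : ℝ) : ℝ := ⨅ ξ : ℝ, (α * ξ + C.beta ξ)

end BMData

/-- The lower `θ`-intermediate dimension of a set in a metric space. -/
def lowerInterDim {X : Type*} [MetricSpace X] (θ : ℝ) (F : Set X) : ℝ :=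
  sInf { s : ℝ | 0 ≤ s ∧ ∀ ε > 0, ∀ δ₀ > 0, ∃ δ : ℝ, 0 < δ ∧ δ ≤ δ₀ ∧
    ∃ 𝒰 : Set (Set X), 𝒰.Countable ∧ F ⊆ ⋃₀ 𝒰 ∧
      (∀ U ∈ 𝒰, δ ^ (1 / θ) ≤ Metric.diam U ∧ Metric.diam U ≤ δ) ∧
      (∑' U : 𝒰, ENNReal.ofReal (Metric.diam (U : Set X) ^ s)) ≤ ENNReal.ofReal ε }

/-- The upper `θ`-intermediate dimension of a set in a metric space. -/
def upperInterDim {X : Type*} [MetricSpace X] (θ : ℝ) (F : Set X) : ℝ :=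
  sInf { s : ℝ | 0 ≤ s ∧ ∀ ε > 0, ∃ δ₀ > 0, ∀ δ : ℝ, 0 < δ → δ ≤ δ₀ →
    ∃ 𝒰 : Set (Set X), 𝒰.Countable ∧ F ⊆ ⋃₀ 𝒰 ∧
      (∀ U ∈ 𝒰, δ ^ (1 / θ) ≤ Metric.diam U ∧ Metric.diam U ≤ δ) ∧
      (∑' U : 𝒰, ENNReal.ofReal (Metric.diam (U : Set X) ^ s)) ≤ ENNReal.ofReal ε }

/-- The topological support of a Borel measure: the set of points all of whose
neighbourhoods have positive measure. -/
def measSupport {X : Type*} [MetricSpace X] [MeasurableSpace X] (μ : Measure X) : Set X :=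
  { x | ∀ r : ℝ, 0 < r → 0 < μ (Metric.ball x r) }

/-- `S^s_{δ,θ}(F)`: the infimal `s`-cost of a countable cover of `F` by sets of diameter
between `δ^{1/θ}` and `δ`. -/
def interCost {X : Type*} [MetricSpace X] (F : Set X) (θ s δ : ℝ) : ℝ≥0∞ :=
  sInf { c : ℝ≥0∞ | ∃ 𝒰 : Set (Set X), 𝒰.Countable ∧ F ⊆ ⋃₀ 𝒰 ∧
    (∀ U ∈ 𝒰, δ ^ (1 / θ) ≤ Metric.diam U ∧ Metric.diam U ≤ δ) ∧
    c = ∑' U : 𝒰, ENNReal.ofReal (Metric.diam (U : Set X) ^ s) }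

lemma ConvexOn.lt_of_mem_Ioo {s : Set ℝ} {f : ℝ → ℝ} (hf : ConvexOn ℝ s f) {x y z c : ℝ}
    (hx : x ∈ s) (hz : z ∈ s) (hy : y ∈ Ioo x z) (hfx : f x < c) (hfz : f z ≤ c) : f y < c := by
  obtain ⟨p, q, hp, hq, hpq, rfl⟩ := Ioo_subset_openSegment hy
  calc f (p • x + q • z) ≤ p • f x + q • f z := hf.2 hx hz hp.le hq.le hpq
    _ < p • c + q • c := add_lt_add_of_lt_of_le (smul_lt_smul_of_pos_left hfx hp)
        (smul_le_smul_of_nonneg_left hfz hq.le)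
    _ = c := by rw [← add_smul, hpq, one_smul]

theorem ConvexOn.existsUnique_eq_of_lt {f : ℝ → ℝ} {lo hi x₀ y₀ c : ℝ}
    (hf : ConvexOn ℝ (Icc lo hi) f) (hx₀ : x₀ ∈ Ioo lo hi) (hy₀ : y₀ ∈ Ioo x₀ hi)
    (hfx₀ : f x₀ < c) (hfy₀ : c < f y₀) : ∃! x, x ∈ Ioo x₀ hi ∧ f x = c := by
  have hcont : ContinuousOn f (Icc x₀ y₀) :=
    (interior_Icc (a := lo) ▸ hf.continuousOn_interior).mono fun x hx =>
      ⟨hx₀.1.trans_le hx.1, hx.2.trans_lt hy₀.2⟩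
  obtain ⟨x, hx, hfx⟩ := intermediate_value_Ioo hy₀.1.le hcont ⟨hfx₀, hfy₀⟩
  refine ⟨x, ⟨⟨hx.1, hx.2.trans hy₀.2⟩, hfx⟩, fun y ⟨hy, hfy⟩ => ?_⟩
  have hmem {z : ℝ} (hz : z ∈ Ioo x₀ hi) : z ∈ Icc lo hi := ⟨(hx₀.1.trans hz.1).le, hz.2.le⟩
  have hx₀' : x₀ ∈ Icc lo hi := Ioo_subset_Icc_self hx₀
  rcases lt_trichotomy y x with hyx | rfl | hxy
  · exact absurd hfy
      (hf.lt_of_mem_Ioo hx₀' (hmem ⟨hx.1, hx.2.trans hy₀.2⟩) ⟨hy.1, hyx⟩ hfx₀ hfx.le).ne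
  · rfl
  · exact absurd hfx (hf.lt_of_mem_Ioo hx₀' (hmem hy) ⟨hx.1, hxy⟩ hfx₀ hfy.le).ne

section RateFunction

variable {ι : Type*}

def logMeanRpow (J : Finset ι) (a : ι → ℝ) (l : ℝ) : ℝ :=
  Real.log ((1 / (J.card : ℝ)) * ∑ j ∈ J, a j ^ l)

def tiltedWeight (J : Finset ι) (a : ι → ℝ) (u : ℝ) (j : ι) : ℝ :=
  a j ^ u / ∑ i ∈ J, a i ^ u

def tiltedLogMean (J : Finset ι) (a : ι → ℝ) (u : ℝ) : ℝ :=
  (∑ j ∈ J, a j ^ u * Real.log (a j)) / ∑ j ∈ J, a j ^ u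

def rateFunction (J : Finset ι) (a : ι → ℝ) (t : ℝ) : ℝ :=
  ⨆ l : ℝ, (l * t - logMeanRpow J a l)

variable {J : Finset ι} {a : ι → ℝ}

lemma sum_rpow_pos (ha : ∀ j ∈ J, 0 < a j) (hJ : J.Nonempty) (l : ℝ) :
    0 < ∑ j ∈ J, a j ^ l :=
  Finset.sum_pos (fun j hj => Real.rpow_pos_of_pos (ha j hj) l) hJ

lemma logMeanRpow_eq_log_sum_sub (ha : ∀ j ∈ J, 0 < a j) (hJ : J.Nonempty) (l : ℝ) :
    logMeanRpow J a l = Real.log (∑ j ∈ J, a j ^ l) - Real.log J.card := by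
  have hcard : (0 : ℝ) < J.card := by exact_mod_cast hJ.card_pos
  rw [logMeanRpow, Real.log_mul (by positivity) (sum_rpow_pos ha hJ l).ne', one_div, Real.log_inv]
  ring

lemma logMeanRpow_zero : logMeanRpow J a 0 = 0 := by
  rcases J.eq_empty_or_nonempty with rfl | hJ
  · simp [logMeanRpow]
  · have : (J.card : ℝ) ≠ 0 := by exact_mod_cast hJ.card_pos.ne'
    simp [logMeanRpow, this]

lemma tiltedLogMean_zero :
    tiltedLogMean J a 0 = 1 / (J.card : ℝ) * ∑ j ∈ J, Real.log (a j) := by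
  simp [tiltedLogMean, div_eq_inv_mul]

lemma tiltedWeight_pos (ha : ∀ j ∈ J, 0 < a j) (hJ : J.Nonempty) (u : ℝ) {j : ι} (hj : j ∈ J) :
    0 < tiltedWeight J a u j :=
  div_pos (Real.rpow_pos_of_pos (ha j hj) u) (sum_rpow_pos ha hJ u)

lemma sum_tiltedWeight (ha : ∀ j ∈ J, 0 < a j) (hJ : J.Nonempty) (u : ℝ) :
    ∑ j ∈ J, tiltedWeight J a u j = 1 := by
  simp only [tiltedWeight]
  rw [← Finset.sum_div, div_self (sum_rpow_pos ha hJ u).ne']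

lemma tiltedLogMean_eq_sum (u : ℝ) :
    tiltedLogMean J a u = ∑ j ∈ J, tiltedWeight J a u j * Real.log (a j) := by
  simp only [tiltedLogMean, tiltedWeight, Finset.sum_div, div_mul_eq_mul_div]

lemma mul_tiltedLogMean_eq_sum (ha : ∀ j ∈ J, 0 < a j) (u l : ℝ) :
    (l - u) * tiltedLogMean J a u =
      ∑ j ∈ J, tiltedWeight J a u j • Real.log (a j ^ (l - u)) := by
  rw [tiltedLogMean_eq_sum, Finset.mul_sum]
  refine Finset.sum_congr rfl fun j hj => ?_
  rw [smul_eq_mul, Real.log_rpow (ha j hj)]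
  ring

lemma logMeanRpow_sub_eq_log_sum (ha : ∀ j ∈ J, 0 < a j) (hJ : J.Nonempty) (u l : ℝ) :
    logMeanRpow J a l - logMeanRpow J a u =
      Real.log (∑ j ∈ J, tiltedWeight J a u j • a j ^ (l - u)) := by
  have hsum : ∑ j ∈ J, tiltedWeight J a u j • a j ^ (l - u) =
      (∑ j ∈ J, a j ^ l) / ∑ j ∈ J, a j ^ u := by
    rw [Finset.sum_div]
    refine Finset.sum_congr rfl fun j hj => ?_
    rw [smul_eq_mul, tiltedWeight, div_mul_eq_mul_div, ← Real.rpow_add (ha j hj), add_sub_cancel]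
  rw [hsum, logMeanRpow_eq_log_sum_sub ha hJ, logMeanRpow_eq_log_sum_sub ha hJ,
    Real.log_div (sum_rpow_pos ha hJ l).ne' (sum_rpow_pos ha hJ u).ne']
  ring

theorem logMeanRpow_add_mul_tiltedLogMean_le (ha : ∀ j ∈ J, 0 < a j) (hJ : J.Nonempty)
    (u l : ℝ) : logMeanRpow J a u + (l - u) * tiltedLogMean J a u ≤ logMeanRpow J a l := by
  have h := strictConcaveOn_log_Ioi.concaveOn.le_map_sum
    (fun j hj => (tiltedWeight_pos ha hJ u hj).le) (sum_tiltedWeight ha hJ u)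
    (fun j hj => mem_Ioi.2 (Real.rpow_pos_of_pos (ha j hj) (l - u)))
  rw [← mul_tiltedLogMean_eq_sum ha, ← logMeanRpow_sub_eq_log_sum ha hJ] at h
  linarith

theorem logMeanRpow_add_mul_tiltedLogMean_lt (ha : ∀ j ∈ J, 0 < a j)
    (hne : ∃ i ∈ J, ∃ k ∈ J, a i ≠ a k) {u l : ℝ} (hlu : l ≠ u) :
    logMeanRpow J a u + (l - u) * tiltedLogMean J a u < logMeanRpow J a l := by
  obtain ⟨i, hi, k, hk, hik⟩ := hne
  have hJ : J.Nonempty := ⟨i, hi⟩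
  have hpow : a i ^ (l - u) ≠ a k ^ (l - u) := fun h =>
    hik (Real.rpow_left_injOn (sub_ne_zero.2 hlu) (ha i hi).le (ha k hk).le h)
  have h := strictConcaveOn_log_Ioi.lt_map_sum (fun j hj => tiltedWeight_pos ha hJ u hj)
    (sum_tiltedWeight ha hJ u) (fun j hj => mem_Ioi.2 (Real.rpow_pos_of_pos (ha j hj) (l - u)))
    ⟨i, hi, k, hk, hpow⟩
  rw [← mul_tiltedLogMean_eq_sum ha, ← logMeanRpow_sub_eq_log_sum ha hJ] at h
  linarith

theorem logMeanRpow_div_lt_tiltedLogMean (ha : ∀ j ∈ J, 0 < a j)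
    (hne : ∃ i ∈ J, ∃ k ∈ J, a i ≠ a k) {u : ℝ} (hu : 0 < u) :
    logMeanRpow J a u / u < tiltedLogMean J a u := by
  have h := logMeanRpow_add_mul_tiltedLogMean_lt ha hne (l := 0) hu.ne
  rw [logMeanRpow_zero] at h
  rw [div_lt_iff₀ hu]
  linarith

theorem logMeanRpow_sub_lt_mul_log (ha : ∀ j ∈ J, 0 < a j) {j₀ : ι}
    (hmax : ∀ j ∈ J, a j ≤ a j₀) (hlt : ∃ j ∈ J, a j < a j₀) {u l : ℝ} (hul : u < l) :
    logMeanRpow J a l - logMeanRpow J a u < (l - u) * Real.log (a j₀) := by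
  obtain ⟨j, hj, hjj₀⟩ := hlt
  have hJ : J.Nonempty := ⟨j, hj⟩
  have hw {i : ι} (hi : i ∈ J) := tiltedWeight_pos ha hJ u hi
  have hmean : ∑ i ∈ J, tiltedWeight J a u i • a i ^ (l - u) < a j₀ ^ (l - u) :=
    calc ∑ i ∈ J, tiltedWeight J a u i • a i ^ (l - u)
        < ∑ i ∈ J, tiltedWeight J a u i • a j₀ ^ (l - u) := by
          refine Finset.sum_lt_sum (fun i hi => ?_) ⟨j, hj, ?_⟩
          · exact smul_le_smul_of_nonneg_left
              (Real.rpow_le_rpow (ha i hi).le (hmax i hi) (sub_nonneg.2 hul.le)) (hw hi).le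
          · exact smul_lt_smul_of_pos_left
              (Real.rpow_lt_rpow (ha j hj).le hjj₀ (sub_pos.2 hul)) (hw hj)
      _ = a j₀ ^ (l - u) := by rw [← Finset.sum_smul, sum_tiltedWeight ha hJ, one_smul]
  rw [logMeanRpow_sub_eq_log_sum ha hJ, ← Real.log_rpow ((ha j hj).trans hjj₀)]
  exact Real.log_lt_log
    (Finset.sum_pos (fun i hi => smul_pos (hw hi) (Real.rpow_pos_of_pos (ha i hi) _)) hJ) hmean

theorem tiltedLogMean_mem_Ioo (ha : ∀ j ∈ J, 0 < a j) {j₁ j₂ : ι} (hj₁ : j₁ ∈ J) (hj₂ : j₂ ∈ J)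
    (hmin : ∀ j ∈ J, a j₁ ≤ a j) (hmax : ∀ j ∈ J, a j ≤ a j₂) (h₁₂ : a j₁ < a j₂) (u : ℝ) :
    tiltedLogMean J a u ∈ Ioo (Real.log (a j₁)) (Real.log (a j₂)) := by
  have hJ : J.Nonempty := ⟨j₁, hj₁⟩
  have hw {i : ι} (hi : i ∈ J) := tiltedWeight_pos ha hJ u hi
  have hlog : Real.log (a j₁) < Real.log (a j₂) := Real.log_lt_log (ha j₁ hj₁) h₁₂
  have hmean (x : ℝ) : ∑ j ∈ J, tiltedWeight J a u j * x = x := by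
    rw [← Finset.sum_mul, sum_tiltedWeight ha hJ, one_mul]
  rw [tiltedLogMean_eq_sum]
  constructor
  · conv_lhs => rw [← hmean (Real.log (a j₁))]
    refine Finset.sum_lt_sum (fun j hj => ?_) ⟨j₂, hj₂, ?_⟩
    · exact mul_le_mul_of_nonneg_left (Real.log_le_log (ha j₁ hj₁) (hmin j hj)) (hw hj).le
    · exact mul_lt_mul_of_pos_left hlog (hw hj₂)
  · conv_rhs => rw [← hmean (Real.log (a j₂))]
    refine Finset.sum_lt_sum (fun j hj => ?_) ⟨j₁, hj₁, ?_⟩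
    · exact mul_le_mul_of_nonneg_left (Real.log_le_log (ha j hj) (hmax j hj)) (hw hj).le
    · exact mul_lt_mul_of_pos_left hlog (hw hj₁)

lemma mul_sub_logMeanRpow_le_log_card (ha : ∀ j ∈ J, 0 < a j) {j₁ j₂ : ι} (hj₁ : j₁ ∈ J)
    (hj₂ : j₂ ∈ J) {t : ℝ} (ht : t ∈ Icc (Real.log (a j₁)) (Real.log (a j₂))) (l : ℝ) :
    l * t - logMeanRpow J a l ≤ Real.log J.card := by
  have hterm : ∀ j ∈ J, l * Real.log (a j) ≤ Real.log (∑ i ∈ J, a i ^ l) := fun j hj => by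
    rw [← Real.log_rpow (ha j hj)]
    exact Real.log_le_log (Real.rpow_pos_of_pos (ha j hj) l)
      (Finset.single_le_sum (fun i hi => (Real.rpow_pos_of_pos (ha i hi) l).le) hj)
  have hlt : l * t ≤ Real.log (∑ i ∈ J, a i ^ l) := by
    rcases le_total 0 l with hl | hl
    · exact (mul_le_mul_of_nonneg_left ht.2 hl).trans (hterm j₂ hj₂)
    · exact (mul_le_mul_of_nonpos_left ht.1 hl).trans (hterm j₁ hj₁)
  rw [logMeanRpow_eq_log_sum_sub ha ⟨j₁, hj₁⟩]
  linarith

lemma le_rateFunction (ha : ∀ j ∈ J, 0 < a j) {j₁ j₂ : ι} (hj₁ : j₁ ∈ J) (hj₂ : j₂ ∈ J) {t : ℝ}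
    (ht : t ∈ Icc (Real.log (a j₁)) (Real.log (a j₂))) (l : ℝ) :
    l * t - logMeanRpow J a l ≤ rateFunction J a t :=
  le_ciSup ⟨_, forall_mem_range.2 (mul_sub_logMeanRpow_le_log_card ha hj₁ hj₂ ht)⟩ l

theorem convexOn_rateFunction (ha : ∀ j ∈ J, 0 < a j) {j₁ j₂ : ι} (hj₁ : j₁ ∈ J)
    (hj₂ : j₂ ∈ J) : ConvexOn ℝ (Icc (Real.log (a j₁)) (Real.log (a j₂))) (rateFunction J a) := by
  refine ⟨convex_Icc _ _, fun x hx y hy p q hp hq hpq => ciSup_le fun l => ?_⟩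
  have hx' := le_rateFunction ha hj₁ hj₂ hx l
  have hy' := le_rateFunction ha hj₁ hj₂ hy l
  calc l * (p • x + q • y) - logMeanRpow J a l
      = p * (l * x - logMeanRpow J a l) + q * (l * y - logMeanRpow J a l) := by
        simp only [smul_eq_mul]
        linear_combination (logMeanRpow J a l) * hpq
    _ ≤ p • rateFunction J a x + q • rateFunction J a y := by
        simp only [smul_eq_mul]
        gcongr

theorem rateFunction_tiltedLogMean (ha : ∀ j ∈ J, 0 < a j) (hJ : J.Nonempty) (u : ℝ) :
    rateFunction J a (tiltedLogMean J a u) = u * tiltedLogMean J a u - logMeanRpow J a u := by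
  have htangent (l : ℝ) : l * tiltedLogMean J a u - logMeanRpow J a l ≤
      u * tiltedLogMean J a u - logMeanRpow J a u := by
    linarith [logMeanRpow_add_mul_tiltedLogMean_le ha hJ u l]
  exact le_antisymm (ciSup_le htangent) (le_ciSup ⟨_, forall_mem_range.2 htangent⟩ u)

theorem rateFunction_tiltedLogMean_zero (ha : ∀ j ∈ J, 0 < a j) (hJ : J.Nonempty) :
    rateFunction J a (tiltedLogMean J a 0) = 0 := by
  rw [rateFunction_tiltedLogMean ha hJ, logMeanRpow_zero]
  ring

theorem rateFunction_tiltedLogMean_pos (ha : ∀ j ∈ J, 0 < a j)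
    (hne : ∃ i ∈ J, ∃ k ∈ J, a i ≠ a k) {u : ℝ} (hu : u ≠ 0) :
    0 < rateFunction J a (tiltedLogMean J a u) := by
  have hJ : J.Nonempty := let ⟨i, hi, _⟩ := hne; ⟨i, hi⟩
  have h := logMeanRpow_add_mul_tiltedLogMean_lt ha hne (l := 0) hu.symm
  rw [logMeanRpow_zero] at h
  rw [rateFunction_tiltedLogMean ha hJ]
  linarith

/-- Minus the value at `0` of the chord of `logMeanRpow J a` over `[u, 1]`. -/
def chordLevel (J : Finset ι) (a : ι → ℝ) (u : ℝ) : ℝ :=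
  (u * logMeanRpow J a 1 - logMeanRpow J a u) / (1 - u)

/-- The chord of `logMeanRpow J a` over `[u, 1]` lies above its tangent at `u`. -/
theorem rateFunction_tiltedLogMean_lt_chordLevel (ha : ∀ j ∈ J, 0 < a j)
    (hne : ∃ i ∈ J, ∃ k ∈ J, a i ≠ a k) {u : ℝ} (hu₀ : 0 < u) (hu₁ : u < 1) :
    rateFunction J a (tiltedLogMean J a u) < chordLevel J a u := by
  have hJ : J.Nonempty := let ⟨i, hi, _⟩ := hne; ⟨i, hi⟩
  have h := logMeanRpow_add_mul_tiltedLogMean_lt ha hne (l := 1) hu₁.ne'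
  rw [rateFunction_tiltedLogMean ha hJ, chordLevel, lt_div_iff₀ (sub_pos.2 hu₁)]
  nlinarith

/-- The chord of `logMeanRpow J a` over `[u, 1]` has slope less than `log (a j₀)`. -/
theorem chordLevel_lt_log_sub_logMeanRpow_one (ha : ∀ j ∈ J, 0 < a j) {j₀ : ι}
    (hmax : ∀ j ∈ J, a j ≤ a j₀) (hlt : ∃ j ∈ J, a j < a j₀) {u : ℝ} (hu : u < 1) :
    chordLevel J a u < Real.log (a j₀) - logMeanRpow J a 1 := by
  have h := logMeanRpow_sub_lt_mul_log ha hmax hlt hu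
  rw [chordLevel, div_lt_iff₀ (sub_pos.2 hu)]
  linarith

theorem existsUnique_rateFunction_eq_chordLevel (ha : ∀ j ∈ J, 0 < a j)
    (hne : ∃ i ∈ J, ∃ k ∈ J, a i ≠ a k) {j₀ : ι} (hj₀ : j₀ ∈ J) (hmax : ∀ j ∈ J, a j ≤ a j₀)
    {u : ℝ} (hu₀ : 0 < u) (hu₁ : u < 1) :
    (∃! t, t ∈ Ioo (tiltedLogMean J a 0) (Real.log (a j₀)) ∧
        rateFunction J a t = chordLevel J a u) ∧
      ∀ t ∈ Ioo (tiltedLogMean J a 0) (Real.log (a j₀)),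
        rateFunction J a t = chordLevel J a u → tiltedLogMean J a u < t := by
  have hJ : J.Nonempty := ⟨j₀, hj₀⟩
  obtain ⟨j₁, hj₁, hmin⟩ := J.exists_min_image a hJ
  have hlt : ∃ j ∈ J, a j < a j₀ := by
    obtain ⟨i, hi, k, hk, hik⟩ := hne
    by_cases hi₀ : a i = a j₀
    · exact ⟨k, hk, (hmax k hk).lt_of_ne fun h => hik (hi₀.trans h.symm)⟩
    · exact ⟨i, hi, (hmax i hi).lt_of_ne hi₀⟩
  have h₁₀ : a j₁ < a j₀ := let ⟨j, hj, hjj₀⟩ := hlt; (hmin j hj).trans_lt hjj₀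
  set c := chordLevel J a u
  have hconv := convexOn_rateFunction ha hj₁ hj₀
  have hlow := tiltedLogMean_mem_Ioo ha hj₁ hj₀ hmin hmax h₁₀ 0
  have hrate_tp := rateFunction_tiltedLogMean_lt_chordLevel ha hne hu₀ hu₁
  have hrate_low : rateFunction J a (tiltedLogMean J a 0) < c := by
    rw [rateFunction_tiltedLogMean_zero ha hJ]
    exact (rateFunction_tiltedLogMean_pos ha hne hu₀.ne').trans hrate_tp
  -- near `log (a j₀)` the affine minorant `t ↦ t - logMeanRpow J a 1` already exceeds `c`
  obtain ⟨t₂, ht₂, ht₂₀⟩ := exists_between <| max_lt hlow.2 <|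
    lt_sub_iff_add_lt.1 (chordLevel_lt_log_sub_logMeanRpow_one ha hmax hlt hu₁)
  have hrate_t₂ : c < rateFunction J a t₂ := by
    have h := le_rateFunction ha hj₁ hj₀ ⟨(hlow.1.trans (max_lt_iff.1 ht₂).1).le, ht₂₀.le⟩ 1
    linarith [(max_lt_iff.1 ht₂).2]
  refine ⟨hconv.existsUnique_eq_of_lt hlow ⟨(max_lt_iff.1 ht₂).1, ht₂₀⟩ hrate_low hrate_t₂,
    fun t ht hrate_t => ?_⟩
  by_contra! htp
  rcases htp.eq_or_lt with rfl | htp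
  · exact hrate_tp.ne hrate_t
  · exact (hconv.lt_of_mem_Ioo (Ioo_subset_Icc_self hlow)
      (Ioo_subset_Icc_self (tiltedLogMean_mem_Ioo ha hj₁ hj₀ hmin hmax h₁₀ u)) ⟨ht.1, htp⟩
      hrate_low hrate_tp.le).ne hrate_t

end RateFunction

namespace BMData

variable (C : BMData)

lemma cols_nonempty : C.cols.Nonempty :=
  Finset.card_pos.mp (by have := C.one_lt_cols; unfold cols; omega)

lemma colCount_pos : ∀ j ∈ C.cols, (0 : ℝ) < C.colCount j := fun j hj => by
  obtain ⟨p, hp, rfl⟩ := Finset.mem_image.mp hj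
  have : 0 < C.colCount p.1 := Finset.card_pos.mpr ⟨p, Finset.mem_filter.mpr ⟨hp, rfl⟩⟩
  exact_mod_cast this

lemma N_eq_sum_colCount : (C.N : ℝ) = ∑ j ∈ C.cols, (C.colCount j : ℝ) := by
  rw [N, Finset.card_eq_sum_card_fiberwise fun p hp => Finset.mem_image_of_mem Prod.fst hp]
  push_cast
  rfl

lemma exists_colCount_eq_iSup :
    ∃ j₀ ∈ C.cols, (⨆ j : {c // c ∈ C.cols}, Real.log (C.colCount j.1)) =
      Real.log (C.colCount j₀) ∧ ∀ j ∈ C.cols, (C.colCount j : ℝ) ≤ C.colCount j₀ := by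
  obtain ⟨j₀, hj₀, hmax⟩ := C.cols.exists_max_image (fun j => (C.colCount j : ℝ)) C.cols_nonempty
  have := C.cols_nonempty.to_subtype
  refine ⟨j₀, hj₀, le_antisymm (ciSup_le fun j => ?_) ?_, hmax⟩
  · exact Real.log_le_log (C.colCount_pos j.1 j.2) (hmax j.1 j.2)
  · exact le_ciSup (f := fun j : {c // c ∈ C.cols} => Real.log (C.colCount j.1))
      (Set.finite_range _).bddAbove ⟨j₀, hj₀⟩

lemma log_m_pos : 0 < Real.log C.m :=
  Real.log_pos (by exact_mod_cast C.two_le_m)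

lemma log_m_lt_log_n : Real.log C.m < Real.log C.n :=
  Real.log_lt_log (by have := C.two_le_m; positivity) (by exact_mod_cast C.m_lt_n)

lemma gamma_inv_eq : C.gamma⁻¹ = Real.log C.m / Real.log C.n := inv_div _ _

lemma gamma_inv_mem_Ioo : C.gamma⁻¹ ∈ Ioo 0 1 := by
  have hn := C.log_m_pos.trans C.log_m_lt_log_n
  rw [gamma_inv_eq]
  exact ⟨div_pos C.log_m_pos hn, (div_lt_one hn).2 C.log_m_lt_log_n⟩

lemma dimB_sub_dimH : C.dimB - C.dimH =
    (1 - C.gamma⁻¹) * chordLevel C.cols (fun j => (C.colCount j : ℝ)) C.gamma⁻¹ /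
      Real.log C.m := by
  have hm := C.log_m_pos
  have hn := hm.trans C.log_m_lt_log_n
  have hu := sub_pos.2 C.gamma_inv_mem_Ioo.2
  rw [chordLevel, mul_div_cancel₀ _ hu.ne', logMeanRpow_eq_log_sum_sub C.colCount_pos
    C.cols_nonempty, logMeanRpow_eq_log_sum_sub C.colCount_pos C.cols_nonempty]
  simp only [Real.rpow_one]
  rw [← N_eq_sum_colCount, dimB, dimH, gamma_inv_eq, M]
  field_simp
  ring

lemma dimH_eq_dimB_sub_iff (r : ℝ) :
    C.dimH = C.dimB - (1 - C.gamma⁻¹) * r / Real.log C.m ↔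
      r = chordLevel C.cols (fun j => (C.colCount j : ℝ)) C.gamma⁻¹ := by
  rw [eq_sub_iff_add_eq', ← eq_sub_iff_add_eq, dimB_sub_dimH, div_left_inj' C.log_m_pos.ne',
    mul_right_inj' (sub_pos.2 C.gamma_inv_mem_Ioo.2).ne']

lemma tseq_dimH_zero :
    C.tseq C.dimH 0 =
      logMeanRpow C.cols (fun j => (C.colCount j : ℝ)) C.gamma⁻¹ / C.gamma⁻¹ := by
  have hm := C.log_m_pos
  have hn := hm.trans C.log_m_lt_log_n
  rw [logMeanRpow_eq_log_sum_sub C.colCount_pos C.cols_nonempty, tseq, dimH, gamma_inv_eq, M]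
  field_simp

end BMData

/-- **Lemma 4.2.** With `t' = (∑_ĵ N_ĵ^{1/γ} log N_ĵ)/(∑_ĵ N_ĵ^{1/γ})`, there is a unique
`t* ∈ (t̲, max_ĵ log N_ĵ)` with `dim_H Λ = dim_B Λ − (1 − γ⁻¹)·I(t*)/log m`, and moreover
`t_1(dim_H Λ) < t' < t*`. -/
theorem statement18 (C : BMData) (hnu : C.NonUniform) (tp : ℝ)
    (htp : tp = (∑ j ∈ C.cols, (C.colCount j : ℝ) ^ (1 / C.gamma) * Real.log (C.colCount j))
        / (∑ j ∈ C.cols, (C.colCount j : ℝ) ^ (1 / C.gamma))) :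
    (∃! tstar : ℝ,
      tstar ∈ Set.Ioo C.tLow (⨆ j : {c // c ∈ C.cols}, Real.log (C.colCount j.1)) ∧
      C.dimH = C.dimB - (1 - C.gamma⁻¹) * C.rate tstar / Real.log C.m) ∧
    (∀ tstar : ℝ,
      tstar ∈ Set.Ioo C.tLow (⨆ j : {c // c ∈ C.cols}, Real.log (C.colCount j.1)) →
      C.dimH = C.dimB - (1 - C.gamma⁻¹) * C.rate tstar / Real.log C.m →
      C.tseq C.dimH 0 < tp ∧ tp < tstar) := by
  obtain ⟨j₀, hj₀, hsup, hmax⟩ := C.exists_colCount_eq_iSup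
  have hne : ∃ i ∈ C.cols, ∃ k ∈ C.cols, (C.colCount i : ℝ) ≠ C.colCount k :=
    let ⟨i, hi, k, hk, hik⟩ := hnu; ⟨i, hi, k, hk, Nat.cast_injective.ne hik⟩
  have hu := C.gamma_inv_mem_Ioo
  obtain ⟨hunique, hlt⟩ :=
    existsUnique_rateFunction_eq_chordLevel C.colCount_pos hne hj₀ hmax hu.1 hu.2
  have htLow : C.tLow = tiltedLogMean C.cols (fun j => (C.colCount j : ℝ)) 0 :=
    tiltedLogMean_zero.symm
  rw [one_div] at htp
  simp only [hsup, htLow, C.dimH_eq_dimB_sub_iff]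
  refine ⟨hunique, fun t ht hrate => ⟨?_, htp ▸ hlt t ht hrate⟩⟩
  rw [C.tseq_dimH_zero, htp]
  exact logMeanRpow_div_lt_tiltedLogMean C.colCount_pos hne hu.1
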